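/- arXiv:2502.00995 — 3 statements merged into one kernel-verified Lean document; each statement's English description precedes it below -/
import Mathlib

section
/- Let C be a small C*-category. Then the space [C;ℂ] of all *-functors C → ℂ, equipped with the weak-* topology, is a compact Hausdorff topological space. -/
universe u v

/-- A small C*-category: objects `O`, hom-spaces `Hom A B` (the morphisms `C_{AB} = Hom(B,A)`),
each a complex Banach space, with bilinear submultiplicative composition and a conjugate-linear
involution satisfying the C*-identity and positivity of `x* ∘ x`. -/
class CStarCategory (O : Type u) (Hom : O → O → Type v)
    [∀ A B, NormedAddCommGroup (Hom A B)]
    [∀ A B, NormedSpace ℂ (Hom A B)] where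
  comp : ∀ {A B C : O}, Hom A B → Hom B C → Hom A C
  ident : ∀ A : O, Hom A A
  star : ∀ {A B : O}, Hom A B → Hom B A
  complete : ∀ A B : O, CompleteSpace (Hom A B)
  comp_assoc : ∀ {A B C D : O} (x : Hom A B) (y : Hom B C) (z : Hom C D),
    comp (comp x y) z = comp x (comp y z)
  ident_comp : ∀ {A B : O} (x : Hom A B), comp (ident A) x = x
  comp_ident : ∀ {A B : O} (x : Hom A B), comp x (ident B) = x
  add_comp : ∀ {A B C : O} (x x' : Hom A B) (y : Hom B C),
    comp (x + x') y = comp x y + comp x' y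
  comp_add : ∀ {A B C : O} (x : Hom A B) (y y' : Hom B C),
    comp x (y + y') = comp x y + comp x y'
  smul_comp : ∀ {A B C : O} (c : ℂ) (x : Hom A B) (y : Hom B C),
    comp (c • x) y = c • comp x y
  comp_smul : ∀ {A B C : O} (c : ℂ) (x : Hom A B) (y : Hom B C),
    comp x (c • y) = c • comp x y
  norm_comp_le : ∀ {A B C : O} (x : Hom A B) (y : Hom B C), ‖comp x y‖ ≤ ‖x‖ * ‖y‖
  star_star : ∀ {A B : O} (x : Hom A B), star (star x) = x
  star_add : ∀ {A B : O} (x y : Hom A B), star (x + y) = star x + star y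
  star_smul : ∀ {A B : O} (c : ℂ) (x : Hom A B),
    star (c • x) = (starRingEnd ℂ c) • star x
  star_comp : ∀ {A B C : O} (x : Hom A B) (y : Hom B C),
    star (comp x y) = comp (star y) (star x)
  star_ident : ∀ A : O, star (ident A) = ident A
  norm_star_comp_self : ∀ {A B : O} (x : Hom A B), ‖comp (star x) x‖ = ‖x‖ ^ 2
  star_comp_self_positive : ∀ {A B : O} (x : Hom A B),
    ∃ b : Hom B B, star b = b ∧ comp (star x) x = comp b b

/-- A `*`-functor from a small C*-category to `ℂ`: ℂ-linear on every hom-space,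
multiplicative on composition, unital on identities and compatible with the involutions. -/
structure StarFunctor (O : Type u) (Hom : O → O → Type v)
    [∀ A B, NormedAddCommGroup (Hom A B)] [∀ A B, NormedSpace ℂ (Hom A B)]
    [CStarCategory O Hom] where
  toFun : ∀ {A B : O}, Hom A B → ℂ
  map_add : ∀ {A B : O} (x y : Hom A B), toFun (x + y) = toFun x + toFun y
  map_smul : ∀ {A B : O} (c : ℂ) (x : Hom A B), toFun (c • x) = c * toFun x
  map_comp : ∀ {A B C : O} (x : Hom A B) (y : Hom B C),
    toFun (CStarCategory.comp x y) = toFun x * toFun y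
  map_ident : ∀ A : O, toFun (CStarCategory.ident A) = 1
  map_star : ∀ {A B : O} (x : Hom A B),
    toFun (CStarCategory.star x) = starRingEnd ℂ (toFun x)

/-- A C*-category is commutative if all diagonal hom-sets are commutative C*-algebras. -/
def CStarCategory.IsCommutative (O : Type u) (Hom : O → O → Type v)
    [∀ A B, NormedAddCommGroup (Hom A B)] [∀ A B, NormedSpace ℂ (Hom A B)]
    [CStarCategory O Hom] : Prop :=
  ∀ (A : O) (x y : Hom A A), CStarCategory.comp x y = CStarCategory.comp y x

variable {O : Type u} {Hom : O → O → Type v}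
    [∀ A B, NormedAddCommGroup (Hom A B)] [∀ A B, NormedSpace ℂ (Hom A B)]
    [CStarCategory O Hom]

/-- The weak-*-topology on the space `[C;ℂ]` of `*`-functors: the initial topology induced by
all evaluation maps `ev_x : ω ↦ ω(x)`. -/
noncomputable instance StarFunctor.instTopologicalSpace : TopologicalSpace (StarFunctor O Hom) :=
  TopologicalSpace.induced
    (fun ω => fun (A B : O) (x : Hom A B) => ω.toFun x) inferInstance

/-!
Every `*`-functor is contractive. On a diagonal hom-space `C_{BB}`, a unital Banach algebra,
it is a character, so `ω a` lies in the spectrum of `a` and `‖ω a‖ ≤ ‖a‖ * ‖ι_B‖ ≤ ‖a‖`. For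
an arbitrary `x`, the C*-identity gives `‖ω x‖² = ‖ω (x* ∘ x)‖ ≤ ‖x* ∘ x‖ = ‖x‖²`. Hence
evaluation embeds `[C;ℂ]` into the Tychonoff product of the closed discs of radius `‖x‖`, as the
subset cut out by the closed conditions of linearity, multiplicativity, unitality and
`*`-compatibility; a closed subset of a compact Hausdorff space is compact Hausdorff.
-/

namespace CStarCategory

lemma zero_comp {A B C : O} (y : Hom B C) : comp (0 : Hom A B) y = 0 := by
  simpa using smul_comp (O := O) (Hom := Hom) (0 : ℂ) (0 : Hom A B) y

lemma comp_zero {A B C : O} (x : Hom A B) : comp x (0 : Hom B C) = 0 := by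
  simpa using comp_smul (O := O) (Hom := Hom) (0 : ℂ) x (0 : Hom B C)

lemma norm_ident_le_one (B : O) : ‖ident (Hom := Hom) B‖ ≤ 1 := by
  have h := norm_star_comp_self (Hom := Hom) (ident B)
  rw [star_ident, comp_ident, sq] at h
  nlinarith [norm_nonneg (ident (Hom := Hom) B)]

abbrev diagNormedRing (B : O) : NormedRing (Hom B B) :=
  { (inferInstance : NormedAddCommGroup (Hom B B)) with
    mul := comp
    one := ident B
    mul_assoc := comp_assoc
    one_mul := ident_comp
    mul_one := comp_ident
    left_distrib := comp_add
    right_distrib := add_comp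
    zero_mul := zero_comp
    mul_zero := comp_zero
    norm_mul_le := norm_comp_le }

end CStarCategory

namespace StarFunctor

open CStarCategory

lemma map_zero (ω : StarFunctor O Hom) {A B : O} : ω.toFun (0 : Hom A B) = 0 := by
  simpa using ω.map_smul 0 (0 : Hom A B)

lemma norm_apply_le_of_diag (ω : StarFunctor O Hom) {B : O} (a : Hom B B) :
    ‖ω.toFun a‖ ≤ ‖a‖ := by
  let : NormedRing (Hom B B) := diagNormedRing B
  let : CompleteSpace (Hom B B) := complete B B
  let : Algebra ℂ (Hom B B) := Algebra.ofModule smul_comp comp_smul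
  let : NormedAlgebra ℂ (Hom B B) := { norm_smul_le := norm_smul_le }
  let φ : Hom B B →ₐ[ℂ] ℂ :=
    { toFun := ω.toFun
      map_one' := ω.map_ident B
      map_mul' := ω.map_comp
      map_zero' := ω.map_zero
      map_add' := ω.map_add
      commutes' := fun c => by
        change ω.toFun (c • ident B) = c
        rw [ω.map_smul, ω.map_ident, mul_one] }
  calc ‖ω.toFun a‖ ≤ ‖a‖ * ‖ident (Hom := Hom) B‖ := AlgHom.norm_apply_le_self_mul_norm_one φ a
    _ ≤ ‖a‖ := mul_le_of_le_one_right (norm_nonneg a) (norm_ident_le_one B)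

lemma norm_apply_le (ω : StarFunctor O Hom) {A B : O} (x : Hom A B) : ‖ω.toFun x‖ ≤ ‖x‖ := by
  have h : ‖ω.toFun x‖ ^ 2 ≤ ‖x‖ ^ 2 :=
    calc ‖ω.toFun x‖ ^ 2 = ‖ω.toFun (comp (star x) x)‖ := by
          rw [ω.map_comp, ω.map_star, norm_mul, RCLike.norm_conj, sq]
      _ ≤ ‖comp (star x) x‖ := ω.norm_apply_le_of_diag _
      _ = ‖x‖ ^ 2 := norm_star_comp_self x
  exact pow_le_pow_iff_left₀ (norm_nonneg _) (norm_nonneg _) two_ne_zero |>.mp h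

variable (O Hom) in
def eval (ω : StarFunctor O Hom) : ∀ A B : O, Hom A B → ℂ := fun _ _ x => ω.toFun x

lemma eval_injective : Function.Injective (eval O Hom) := by
  rintro ⟨f, _⟩ ⟨g, _⟩ h
  obtain rfl : @f = @g := by
    funext A B x
    exact congrFun₃ h A B x
  rfl

lemma isEmbedding_eval : Topology.IsEmbedding (eval O Hom) := ⟨⟨rfl⟩, eval_injective⟩

lemma range_eval : Set.range (eval O Hom) =
    {f | (∀ (A B : O) (x y : Hom A B), f A B (x + y) = f A B x + f A B y) ∧
       (∀ (A B : O) (c : ℂ) (x : Hom A B), f A B (c • x) = c * f A B x) ∧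
       (∀ (A B C : O) (x : Hom A B) (y : Hom B C), f A C (comp x y) = f A B x * f B C y) ∧
       (∀ A : O, f A A (ident A) = 1) ∧
       (∀ (A B : O) (x : Hom A B), f B A (star x) = starRingEnd ℂ (f A B x))} := by
  ext f
  constructor
  · rintro ⟨ω, rfl⟩
    exact ⟨fun _ _ => ω.map_add, fun _ _ => ω.map_smul, fun _ _ _ => ω.map_comp,
      ω.map_ident, fun _ _ => ω.map_star⟩
  · rintro ⟨hadd, hsmul, hcomp, hident, hstar⟩
    exact ⟨⟨fun x => f _ _ x, hadd _ _, hsmul _ _, hcomp _ _ _, hident, hstar _ _⟩, rfl⟩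

lemma isClosed_range_eval : IsClosed (Set.range (eval O Hom)) := by
  rw [range_eval]
  simp only [Set.ofPred_and, Set.ofPred_forall]
  repeat' first | refine IsClosed.inter ?_ ?_ | refine isClosed_iInter fun _ => ?_
  all_goals refine isClosed_eq ?_ ?_ <;> fun_prop

lemma range_eval_subset_pi_closedBall : Set.range (eval O Hom) ⊆
    Set.univ.pi fun A => Set.univ.pi fun B => Set.univ.pi fun x : Hom A B =>
      Metric.closedBall 0 ‖x‖ := by
  rintro _ ⟨ω, rfl⟩ A - B - x -
  simpa [eval] using ω.norm_apply_le x

end StarFunctor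

/-- The space `[C;ℂ]` of all `*`-functors `C → ℂ` on a small C*-category,
with the weak-*-topology, is compact and Hausdorff. -/
theorem StarFunctor.compactSpace_and_t2Space :
    CompactSpace (StarFunctor O Hom) ∧ T2Space (StarFunctor O Hom) := by
  have hK : IsCompact (Set.univ.pi fun A => Set.univ.pi fun B =>
      Set.univ.pi fun x : Hom A B => Metric.closedBall (0 : ℂ) ‖x‖) :=
    isCompact_univ_pi fun _ => isCompact_univ_pi fun _ => isCompact_univ_pi fun x =>
      isCompact_closedBall 0 ‖x‖
  have hrange : IsCompact (Set.range (eval O Hom)) :=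
    hK.of_isClosed_subset isClosed_range_eval range_eval_subset_pi_closedBall
  refine ⟨isCompact_univ_iff.mp ?_, isEmbedding_eval.t2Space⟩
  rwa [isEmbedding_eval.isInducing.isCompact_iff, Set.image_univ]
end

section
/- Let C be a small commutative C*-category, A, B objects of C, ω, ρ ∈ [C;ℂ], and u a unimodular complex number such that ρ(x) = u·ω(x) for all x ∈ C_{AB} and ω does not vanish identically on C_{AB}. Then ω(a) = ρ(a) for all a ∈ C_{AA} and ω(b) = ρ(b) for all b ∈ C_{BB}. -/
universe u v

variable {O : Type u} {Hom : O → O → Type v}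
    [∀ A B, NormedAddCommGroup (Hom A B)] [∀ A B, NormedSpace ℂ (Hom A B)]
    [CStarCategory O Hom]

namespace StarFunctor

variable (ω ρ : StarFunctor O Hom)

theorem apply_eq_apply_of_comp_left {A B C : O} {a : Hom C A} {x : Hom A B} {u : ℂ}
    (hu : u ≠ 0) (hωx : ω.toFun x ≠ 0) (hx : ρ.toFun x = u * ω.toFun x)
    (hax : ρ.toFun (CStarCategory.comp a x) = u * ω.toFun (CStarCategory.comp a x)) :
    ω.toFun a = ρ.toFun a := by
  refine mul_right_cancel₀ (mul_ne_zero hu hωx) ?_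
  calc ω.toFun a * (u * ω.toFun x) = u * ω.toFun (CStarCategory.comp a x) := by
        rw [ω.map_comp]; ring
    _ = ρ.toFun (CStarCategory.comp a x) := hax.symm
    _ = ρ.toFun a * (u * ω.toFun x) := by rw [ρ.map_comp, hx]

theorem apply_eq_apply_of_comp_right {A B C : O} {x : Hom A B} {b : Hom B C} {u : ℂ}
    (hu : u ≠ 0) (hωx : ω.toFun x ≠ 0) (hx : ρ.toFun x = u * ω.toFun x)
    (hxb : ρ.toFun (CStarCategory.comp x b) = u * ω.toFun (CStarCategory.comp x b)) :
    ω.toFun b = ρ.toFun b := by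
  refine mul_left_cancel₀ (mul_ne_zero hu hωx) ?_
  calc u * ω.toFun x * ω.toFun b = u * ω.toFun (CStarCategory.comp x b) := by
        rw [ω.map_comp]; ring
    _ = ρ.toFun (CStarCategory.comp x b) := hxb.symm
    _ = u * ω.toFun x * ρ.toFun b := by rw [ρ.map_comp, hx]

end StarFunctor

theorem StarFunctor.eq_on_diagonals_of_phase_related_general
    (A B : O)
    (ω ρ : StarFunctor O Hom) (u : ℂ) (hu : ‖u‖ = 1)
    (h : ∀ x : Hom A B, ρ.toFun x = u * ω.toFun x)
    (hnz : ∃ x : Hom A B, ω.toFun x ≠ 0) :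
    (∀ a : Hom A A, ω.toFun a = ρ.toFun a) ∧ (∀ b : Hom B B, ω.toFun b = ρ.toFun b) := by
  obtain ⟨x, hωx⟩ := hnz
  have hu0 : u ≠ 0 := norm_ne_zero_iff.mp (hu ▸ one_ne_zero)
  exact ⟨fun a => ω.apply_eq_apply_of_comp_left ρ hu0 hωx (h x) (h _),
    fun b => ω.apply_eq_apply_of_comp_right ρ hu0 hωx (h x) (h _)⟩

/-- If two `*`-functors `ω, ρ` on a small commutative C*-category satisfy
`ρ = u·ω` on `C_{AB}` for some unimodular `u`, and `ω` does not vanish identically on `C_{AB}`,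
then `ω` and `ρ` agree on `C_{AA}` and on `C_{BB}`. -/
theorem StarFunctor.eq_on_diagonals_of_phase_related
    (hcomm : CStarCategory.IsCommutative O Hom) (A B : O)
    (ω ρ : StarFunctor O Hom) (u : ℂ) (hu : ‖u‖ = 1)
    (h : ∀ x : Hom A B, ρ.toFun x = u * ω.toFun x)
    (hnz : ∃ x : Hom A B, ω.toFun x ≠ 0) :
    (∀ a : Hom A A, ω.toFun a = ρ.toFun a) ∧ (∀ b : Hom B B, ω.toFun b = ρ.toFun b) :=
  StarFunctor.eq_on_diagonals_of_phase_related_general A B ω ρ u hu h hnz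
end

section
/- Let C be a small commutative C*-category, A, B objects of C, and ω, ρ ∈ [C;ℂ] with ω(a) = ρ(a) for all a ∈ C_{AA}. Then |ω(x)| = |ρ(x)| for every x ∈ C_{AB}; in particular the kernels of ω and ρ on C_{AB} coincide, and if ω does not vanish identically on C_{AB} then there exists a unimodular complex number u with ρ(x) = u·ω(x) for all x ∈ C_{AB}. -/
universe u v

variable {O : Type u} {Hom : O → O → Type v}
    [∀ A B, NormedAddCommGroup (Hom A B)] [∀ A B, NormedSpace ℂ (Hom A B)]
    [CStarCategory O Hom]

/-
Since `ω` and `ρ` agree on `C_{AA}`, they agree on `x ∘ y*` for all `x, y ∈ C_{AB}`, i.e.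
`ω(x) · conj ω(y) = ρ(x) · conj ρ(y)`. The diagonal case `x = y` gives `|ω(x)|² = |ρ(x)|²`, and
fixing `y = x₀` with `ω(x₀) ≠ 0` gives `ρ(x) = u · ω(x)` with `u = conj ω(x₀) / conj ρ(x₀)`.
-/

open ComplexConjugate

namespace Complex

variable {α : Type*} {f g : α → ℂ}

theorem norm_eq_of_mul_conj_eq (hfg : ∀ x y, f x * conj (f y) = g x * conj (g y)) (x : α) :
    ‖f x‖ = ‖g x‖ := by
  have hsq : ((‖f x‖ ^ 2 : ℝ) : ℂ) = ((‖g x‖ ^ 2 : ℝ) : ℂ) := by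
    push_cast
    rw [← mul_conj', ← mul_conj', hfg]
  exact (pow_left_inj₀ (norm_nonneg _) (norm_nonneg _) two_ne_zero).mp (ofReal_injective hsq)

theorem exists_norm_eq_one_eq_mul_of_mul_conj_eq
    (hfg : ∀ x y, f x * conj (f y) = g x * conj (g y)) {x₀ : α} (hx₀ : f x₀ ≠ 0) :
    ∃ u : ℂ, ‖u‖ = 1 ∧ ∀ x, g x = u * f x := by
  have hnorm : ‖f x₀‖ = ‖g x₀‖ := norm_eq_of_mul_conj_eq hfg x₀
  have hg₀ : ‖g x₀‖ ≠ 0 := hnorm ▸ norm_ne_zero_iff.mpr hx₀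
  have hg₀' : conj (g x₀) ≠ 0 := (map_ne_zero _).mpr (norm_ne_zero_iff.mp hg₀)
  refine ⟨conj (f x₀) / conj (g x₀), ?_, fun x => ?_⟩
  · rw [norm_div, norm_conj, norm_conj, hnorm, div_self hg₀]
  · rw [div_mul_eq_mul_div, eq_div_iff hg₀', mul_comm (conj (f x₀)), hfg]

end Complex

namespace StarFunctor

open CStarCategory

theorem map_comp_star (ω : StarFunctor O Hom) {A B : O} (x y : Hom A B) :
    ω.toFun (comp x (star y)) = ω.toFun x * conj (ω.toFun y) := by
  rw [ω.map_comp, ω.map_star]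

theorem mul_conj_eq_of_eq_on_diagonal {ω ρ : StarFunctor O Hom} {A : O}
    (h : ∀ a : Hom A A, ω.toFun a = ρ.toFun a) {B : O} (x y : Hom A B) :
    ω.toFun x * conj (ω.toFun y) = ρ.toFun x * conj (ρ.toFun y) := by
  rw [← map_comp_star, ← map_comp_star, h]

end StarFunctor

theorem StarFunctor.abs_eq_on_hom_of_eq_on_diagonal_general
    (A B : O)
    (ω ρ : StarFunctor O Hom)
    (h : ∀ a : Hom A A, ω.toFun a = ρ.toFun a) :
    (∀ x : Hom A B, ‖ω.toFun x‖ = ‖ρ.toFun x‖) ∧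
    ({x : Hom A B | ω.toFun x = 0} = {x : Hom A B | ρ.toFun x = 0}) ∧
    ((∃ x : Hom A B, ω.toFun x ≠ 0) →
      ∃ u : ℂ, ‖u‖ = 1 ∧ ∀ x : Hom A B, ρ.toFun x = u * ω.toFun x) := by
  have hmul := mul_conj_eq_of_eq_on_diagonal (B := B) h
  have hnorm := Complex.norm_eq_of_mul_conj_eq hmul
  refine ⟨hnorm, ?_, fun ⟨x₀, hx₀⟩ => Complex.exists_norm_eq_one_eq_mul_of_mul_conj_eq hmul hx₀⟩
  ext x
  show ω.toFun x = 0 ↔ ρ.toFun x = 0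
  rw [← norm_eq_zero, hnorm x, norm_eq_zero]

/-- If two `*`-functors `ω, ρ` on a small commutative C*-category agree on
`C_{AA}`, then `|ω(x)| = |ρ(x)|` on `C_{AB}`; in particular their kernels on `C_{AB}` coincide,
and if `ω` is not identically zero on `C_{AB}` then `ρ = u·ω` on `C_{AB}` for some unimodular
`u ∈ ℂ`. -/
theorem StarFunctor.abs_eq_on_hom_of_eq_on_diagonal
    (hcomm : CStarCategory.IsCommutative O Hom) (A B : O)
    (ω ρ : StarFunctor O Hom)
    (h : ∀ a : Hom A A, ω.toFun a = ρ.toFun a) :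
    (∀ x : Hom A B, ‖ω.toFun x‖ = ‖ρ.toFun x‖) ∧
    ({x : Hom A B | ω.toFun x = 0} = {x : Hom A B | ρ.toFun x = 0}) ∧
    ((∃ x : Hom A B, ω.toFun x ≠ 0) →
      ∃ u : ℂ, ‖u‖ = 1 ∧ ∀ x : Hom A B, ρ.toFun x = u * ω.toFun x) :=
  StarFunctor.abs_eq_on_hom_of_eq_on_diagonal_general A B ω ρ h
end
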